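/- Let the domain be an objective indifferences domain R(𝓗) with partition 𝓗 having at least two blocks, let ≻ be any tie-breaking profile, and let x = TTC_≻(R). If y is any allocation with y_j P_j x_j for some agent j assigned in cycle k of TTC_≻(R), then there exists an agent ℓ assigned in an earlier cycle with x_ℓ in the block η(y_j) but y_ℓ not in η(y_j); in particular ¬(y_ℓ I_ℓ x_ℓ). -/
import Mathlib


open scoped Classical

namespace ShapleyScarf

/-- A weak preference relation: complete (total) and transitive, hence reflexive. -/
structure WeakOrder (H : Type*) where
  rel : H → H → Prop
  total : ∀ a b, rel a b ∨ rel b a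
  trans : ∀ a b c, rel a b → rel b c → rel a c

namespace WeakOrder
variable {H : Type*}
/-- Strict part `P` of a weak preference. -/
def P (R : WeakOrder H) (a b : H) : Prop := R.rel a b ∧ ¬ R.rel b a
/-- Indifference part `I` of a weak preference. -/
def I (R : WeakOrder H) (a b : H) : Prop := R.rel a b ∧ R.rel b a
end WeakOrder

/-- `lt` is a strict linear order on agents (a tie-breaking order). -/
def IsTieBreak {n : ℕ} (lt : Fin n → Fin n → Prop) : Prop :=
  (∀ a b, a ≠ b → lt a b ∨ lt b a) ∧ Transitive lt ∧ ∀ a, ¬ lt a a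

section Defs
variable {n : ℕ} {H : Type*} {B : Type*}

/-- Strict part of the tie-broken preference `P_{i,≻}`: `a` above `b` iff
`a P b`, or `a I b` and the owner of `a` comes before the owner of `b` in `≻_i`. -/
def tieBroken (w : Fin n ≃ H) (R : WeakOrder H) (lt : Fin n → Fin n → Prop) (a b : H) : Prop :=
  R.P a b ∨ (R.I a b ∧ lt (w.symm a) (w.symm b))

/-- The weak tie-broken relation `R_{i,≻}` (reflexive closure of the strict part). -/
def tieBrokenWeak (w : Fin n ≃ H) (R : WeakOrder H) (lt : Fin n → Fin n → Prop)
    (a b : H) : Prop :=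
  a = b ∨ tieBroken w R lt a b

/-- The owner (in `S`) of the `pref`-best house among the endowments of the
remaining agents `S`; the agent with this endowment is whom `i` points at. -/
noncomputable def point (w : Fin n ≃ H) (pref : H → H → Prop) (S : Finset (Fin n))
    (i : Fin n) : Fin n :=
  if h : (S.filter fun m => ∀ j ∈ S, j = m ∨ pref (w m) (w j)).Nonempty then
    (S.filter fun m => ∀ j ∈ S, j = m ∨ pref (w m) (w j)).min' h
  else i

/-- The agents of `S` lying on some trading cycle of the pointing map. -/
noncomputable def cycleAgents (w : Fin n ≃ H) (pref : Fin n → H → H → Prop)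
    (S : Finset (Fin n)) : Finset (Fin n) :=
  S.filter fun i => ∃ k, 0 < k ∧ (fun j => point w (pref j) S j)^[k] i = i

/-- Top trading cycles on strict preferences, fuel-based recursion: in each round all
current trading cycles are executed and their agents removed. -/
noncomputable def TTCaux (w : Fin n ≃ H) (pref : Fin n → H → H → Prop) :
    ℕ → Finset (Fin n) → Fin n → H
  | 0, _, i => w i
  | fuel + 1, S, i =>
      if i ∈ cycleAgents w pref S then w (point w (pref i) S i)
      else TTCaux w pref fuel (S \ cycleAgents w pref S) i

/-- Gale's top trading cycles algorithm for a strict preference profile. -/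
noncomputable def TTCstrict (w : Fin n ≃ H) (pref : Fin n → H → H → Prop) : Fin n → H :=
  TTCaux w pref n Finset.univ

/-- Round (executed-cycle index, starting from 1) at which an agent is assigned. -/
noncomputable def TTCroundAux (w : Fin n ≃ H) (pref : Fin n → H → H → Prop) :
    ℕ → Finset (Fin n) → Fin n → ℕ
  | 0, _, _ => 1
  | fuel + 1, S, i =>
      if i ∈ cycleAgents w pref S then 1
      else TTCroundAux w pref fuel (S \ cycleAgents w pref S) i + 1

/-- TTC with fixed tie-breaking: `TTC_≻(R) = TTC(R_≻)`. -/
noncomputable def TTCtb (w : Fin n ≃ H) (R : Fin n → WeakOrder H)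
    (tb : Fin n → Fin n → Fin n → Prop) : Fin n → H :=
  TTCstrict w fun i => tieBroken w (R i) (tb i)

/-- The round in which agent `i` is assigned under `TTC_≻(R)`. -/
noncomputable def TTCtbRound (w : Fin n ≃ H) (R : Fin n → WeakOrder H)
    (tb : Fin n → Fin n → Fin n → Prop) (i : Fin n) : ℕ :=
  TTCroundAux w (fun a => tieBroken w (R a) (tb a)) n Finset.univ i

/-- Objective indifferences w.r.t. the partition of `H` into the fibers of `blk`:
indifference holds exactly between houses in the same block. -/
def ObjInd (blk : H → B) (R : WeakOrder H) : Prop :=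
  ∀ a b, R.I a b ↔ blk a = blk b

/-- `x` is blocked: some coalition `Q` can reallocate its own endowments making
all its members weakly better off and one strictly better off. -/
def Blocks (w : Fin n ≃ H) (R : Fin n → WeakOrder H) (x : Fin n → H) : Prop :=
  ∃ (Q : Finset (Fin n)) (y : Fin n ≃ H),
    Q.image (⇑y) = Q.image (⇑w) ∧
    (∀ i ∈ Q, (R i).rel (y i) (x i)) ∧
    ∃ i ∈ Q, (R i).P (y i) (x i)

/-- `x` is weakly blocked: some nonempty coalition can reallocate its own
endowments making all of its members strictly better off. -/
def WeaklyBlocks (w : Fin n ≃ H) (R : Fin n → WeakOrder H) (x : Fin n → H) : Prop :=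
  ∃ Q : Finset (Fin n), Q.Nonempty ∧ ∃ y : Fin n ≃ H,
    Q.image (⇑y) = Q.image (⇑w) ∧ ∀ i ∈ Q, (R i).P (y i) (x i)

/-- `y` Pareto dominates `x`. -/
def ParetoDom (R : Fin n → WeakOrder H) (y x : Fin n → H) : Prop :=
  (∀ i, (R i).rel (y i) (x i)) ∧ ∃ i, (R i).P (y i) (x i)

end Defs

section AuxProofs
variable {n : ℕ} {H : Type*}

/-- A strict total (irreflexive, transitive, total-on-distinct) relation. -/
def GoodPref {H : Type*} (pref : H → H → Prop) : Prop :=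
  (∀ a b, a ≠ b → pref a b ∨ pref b a) ∧ Transitive pref ∧ ∀ a, ¬ pref a a

lemma GoodPref.asymm {pref : H → H → Prop} (hp : GoodPref pref) {a b : H}
    (h : pref a b) : ¬ pref b a :=
  fun h' => hp.2.2 a (hp.2.1 h h')

lemma filter_max_nonempty (w : Fin n ≃ H) {pref : H → H → Prop} (hp : GoodPref pref)
    {S : Finset (Fin n)} (hS : S.Nonempty) :
    (S.filter fun m => ∀ j ∈ S, j = m ∨ pref (w m) (w j)).Nonempty := by
  classical
  induction hS using Finset.Nonempty.cons_induction with
  | singleton a => exact ⟨a, by simp⟩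
  | cons a s ha hs ih =>
    obtain ⟨m, hm⟩ := ih
    rw [Finset.mem_filter] at hm
    obtain ⟨hmS, hmax⟩ := hm
    have hne : w a ≠ w m := fun h => ha (by rw [w.injective h]; exact hmS)
    rcases hp.1 _ _ hne with h | h
    · refine ⟨a, Finset.mem_filter.2 ⟨Finset.mem_cons_self _ _, ?_⟩⟩
      intro j hj
      rcases Finset.mem_cons.1 hj with rfl | hj
      · exact Or.inl rfl
      · rcases hmax j hj with rfl | h2
        · exact Or.inr h
        · exact Or.inr (hp.2.1 h h2)
    · refine ⟨m, Finset.mem_filter.2 ⟨Finset.mem_cons.2 (Or.inr hmS), ?_⟩⟩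
      intro j hj
      rcases Finset.mem_cons.1 hj with rfl | hj
      · exact Or.inr h
      · exact hmax j hj

lemma point_mem (w : Fin n ≃ H) {pref : H → H → Prop} (hp : GoodPref pref)
    {S : Finset (Fin n)} (hS : S.Nonempty) (i : Fin n) : point w pref S i ∈ S := by
  rw [point, dif_pos (filter_max_nonempty w hp hS)]
  exact Finset.filter_subset _ _ (Finset.min'_mem _ _)

lemma point_spec (w : Fin n ≃ H) {pref : H → H → Prop} (hp : GoodPref pref)
    {S : Finset (Fin n)} (hS : S.Nonempty) (i : Fin n) :
    ∀ j ∈ S, j = point w pref S i ∨ pref (w (point w pref S i)) (w j) := by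
  have hmem : point w pref S i ∈
      S.filter fun m => ∀ j ∈ S, j = m ∨ pref (w m) (w j) := by
    rw [point, dif_pos (filter_max_nonempty w hp hS)]
    exact Finset.min'_mem _ _
  exact (Finset.mem_filter.1 hmem).2

variable (w : Fin n ≃ H) (pref : Fin n → H → H → Prop)

lemma mem_cycleAgents {S : Finset (Fin n)} {i : Fin n} :
    i ∈ cycleAgents w pref S ↔
      i ∈ S ∧ ∃ k, 0 < k ∧ (fun j => point w (pref j) S j)^[k] i = i :=
  Finset.mem_filter

lemma cycleAgents_subset (S : Finset (Fin n)) : cycleAgents w pref S ⊆ S :=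
  Finset.filter_subset _ _

variable (hp : ∀ i, GoodPref (pref i))
include hp

lemma iterate_point_mem {S : Finset (Fin n)} {i : Fin n} (hi : i ∈ S) (a : ℕ) :
    (fun j => point w (pref j) S j)^[a] i ∈ S := by
  induction a with
  | zero => exact hi
  | succ a ih =>
    rw [Function.iterate_succ_apply']
    exact point_mem w (hp _) ⟨i, hi⟩ _

lemma cycleAgents_nonempty {S : Finset (Fin n)} (hS : S.Nonempty) :
    (cycleAgents w pref S).Nonempty := by
  obtain ⟨i, hi⟩ := hS
  set f := fun j => point w (pref j) S j with hf
  obtain ⟨a, b, hab, heq⟩ := Finite.exists_ne_map_eq_of_infinite (fun a : ℕ => f^[a] i)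
  wlog hlt : a < b generalizing a b
  · exact this b a hab.symm heq.symm (by omega)
  refine ⟨f^[a] i, (mem_cycleAgents w pref).2
    ⟨iterate_point_mem w pref hp hi a, b - a, by omega, ?_⟩⟩
  rw [← Function.iterate_add_apply, Nat.sub_add_cancel hlt.le, heq]

lemma point_mem_cycleAgents {S : Finset (Fin n)} {i : Fin n}
    (hi : i ∈ cycleAgents w pref S) :
    point w (pref i) S i ∈ cycleAgents w pref S := by
  rw [mem_cycleAgents] at hi ⊢
  obtain ⟨hiS, k, hk, hfix⟩ := hi
  refine ⟨point_mem w (hp i) ⟨i, hiS⟩ i, k, hk, ?_⟩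
  set f := fun j => point w (pref j) S j with hf
  show f^[k] (f i) = f i
  rw [← Function.iterate_succ_apply, Function.iterate_succ_apply', hfix]

omit hp in
lemma point_injOn_cycleAgents {S : Finset (Fin n)} {i1 i2 : Fin n}
    (h1 : i1 ∈ cycleAgents w pref S) (h2 : i2 ∈ cycleAgents w pref S)
    (heq : point w (pref i1) S i1 = point w (pref i2) S i2) : i1 = i2 := by
  rw [mem_cycleAgents] at h1 h2
  obtain ⟨-, k1, hk1, hf1⟩ := h1
  obtain ⟨-, k2, hk2, hf2⟩ := h2
  set f := fun j => point w (pref j) S j with hf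
  have e1 : f^[k1 * k2] i1 = i1 := by
    rw [Function.iterate_mul]; exact Function.iterate_fixed hf1 k2
  have e2 : f^[k1 * k2] i2 = i2 := by
    rw [mul_comm, Function.iterate_mul]; exact Function.iterate_fixed hf2 k1
  have hpos : 0 < k1 * k2 := Nat.mul_pos hk1 hk2
  have hsucc : k1 * k2 - 1 + 1 = k1 * k2 := by omega
  calc i1 = f^[k1 * k2] i1 := e1.symm
    _ = f^[k1 * k2 - 1] (f i1) := by
        conv_lhs => rw [← hsucc, Function.iterate_succ_apply]
    _ = f^[k1 * k2 - 1] (f i2) := by rw [show f i1 = f i2 from heq]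
    _ = f^[k1 * k2] i2 := by
        conv_rhs => rw [← hsucc, Function.iterate_succ_apply]
    _ = i2 := e2

lemma card_sdiff_cycle_lt {S : Finset (Fin n)} (hS : S.Nonempty) :
    (S \ cycleAgents w pref S).card < S.card := by
  obtain ⟨c, hc⟩ := cycleAgents_nonempty w pref hp hS
  have hsub := cycleAgents_subset w pref S
  have h1 := Finset.card_sdiff_of_subset hsub
  have hpos : 0 < (cycleAgents w pref S).card := Finset.card_pos.2 ⟨c, hc⟩
  have hle := Finset.card_le_card hsub
  have hSpos : 0 < S.card := Finset.card_pos.2 ⟨c, hsub hc⟩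
  omega

omit hp in
lemma TTCroundAux_pos : ∀ (fuel : ℕ) (S : Finset (Fin n)) (i : Fin n),
    0 < TTCroundAux w pref fuel S i := by
  intro fuel
  cases fuel with
  | zero => intro S i; exact Nat.one_pos
  | succ fuel =>
    intro S i
    simp only [TTCroundAux]
    split <;> omega

lemma TTCaux_spec : ∀ (fuel : ℕ) (S : Finset (Fin n)), S.card ≤ fuel → ∀ i ∈ S,
    ∃ m ∈ S, TTCaux w pref fuel S i = w m ∧
      TTCroundAux w pref fuel S m = TTCroundAux w pref fuel S i := by
  intro fuel
  induction fuel with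
  | zero =>
    intro S hcard i hi
    exact absurd (Finset.card_pos.2 ⟨i, hi⟩) (by omega)
  | succ fuel ih =>
    intro S hcard i hi
    by_cases hcyc : i ∈ cycleAgents w pref S
    · refine ⟨point w (pref i) S i, point_mem w (hp i) ⟨i, hi⟩ i, ?_, ?_⟩
      · simp only [TTCaux, if_pos hcyc]
      · have hm := point_mem_cycleAgents w pref hp hcyc
        simp only [TTCroundAux, if_pos hcyc, if_pos hm]
    · have hS' : (S \ cycleAgents w pref S).card ≤ fuel := by
        have := card_sdiff_cycle_lt w pref hp (⟨i, hi⟩ : S.Nonempty)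
        omega
      have hi' : i ∈ S \ cycleAgents w pref S := Finset.mem_sdiff.2 ⟨hi, hcyc⟩
      obtain ⟨m, hm, heq, hrnd⟩ := ih _ hS' i hi'
      have hmS := Finset.mem_sdiff.1 hm
      refine ⟨m, hmS.1, ?_, ?_⟩
      · simp only [TTCaux, if_neg hcyc]; exact heq
      · simp only [TTCroundAux, if_neg hcyc, if_neg hmS.2, hrnd]

lemma TTCaux_inj : ∀ (fuel : ℕ) (S : Finset (Fin n)), S.card ≤ fuel →
    ∀ i1 ∈ S, ∀ i2 ∈ S,
      TTCaux w pref fuel S i1 = TTCaux w pref fuel S i2 → i1 = i2 := by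
  intro fuel
  induction fuel with
  | zero =>
    intro S hcard i1 hi1 i2 hi2 _
    exact absurd (Finset.card_pos.2 ⟨i1, hi1⟩) (by omega)
  | succ fuel ih =>
    intro S hcard i1 hi1 i2 hi2 heq
    have hcard' : (S \ cycleAgents w pref S).card ≤ fuel := by
      have := card_sdiff_cycle_lt w pref hp (⟨i1, hi1⟩ : S.Nonempty)
      omega
    by_cases h1 : i1 ∈ cycleAgents w pref S <;>
      by_cases h2 : i2 ∈ cycleAgents w pref S
    · simp only [TTCaux, if_pos h1, if_pos h2] at heq
      exact point_injOn_cycleAgents w pref h1 h2 (w.injective heq)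
    · simp only [TTCaux, if_pos h1, if_neg h2] at heq
      obtain ⟨m, hm, hx, -⟩ := TTCaux_spec w pref hp fuel _ hcard' i2
        (Finset.mem_sdiff.2 ⟨hi2, h2⟩)
      rw [hx] at heq
      have hpm := w.injective heq
      exact absurd (hpm ▸ point_mem_cycleAgents w pref hp h1)
        (Finset.mem_sdiff.1 hm).2
    · simp only [TTCaux, if_neg h1, if_pos h2] at heq
      obtain ⟨m, hm, hx, -⟩ := TTCaux_spec w pref hp fuel _ hcard' i1
        (Finset.mem_sdiff.2 ⟨hi1, h1⟩)
      rw [hx] at heq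
      have hpm := w.injective heq
      exact absurd (hpm ▸ point_mem_cycleAgents w pref hp h2)
        (Finset.mem_sdiff.1 hm).2
    · simp only [TTCaux, if_neg h1, if_neg h2] at heq
      exact ih _ hcard' i1 (Finset.mem_sdiff.2 ⟨hi1, h1⟩) i2
        (Finset.mem_sdiff.2 ⟨hi2, h2⟩) heq

lemma TTCaux_opt : ∀ (fuel : ℕ) (S : Finset (Fin n)), S.card ≤ fuel →
    ∀ i ∈ S, ∀ m ∈ S,
      pref i (w m) (TTCaux w pref fuel S i) →
      TTCroundAux w pref fuel S m < TTCroundAux w pref fuel S i := by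
  intro fuel
  induction fuel with
  | zero =>
    intro S hcard i hi m _ _
    exact absurd (Finset.card_pos.2 ⟨i, hi⟩) (by omega)
  | succ fuel ih =>
    intro S hcard i hi m hm hpref
    have hcard' : (S \ cycleAgents w pref S).card ≤ fuel := by
      have := card_sdiff_cycle_lt w pref hp (⟨i, hi⟩ : S.Nonempty)
      omega
    by_cases h1 : i ∈ cycleAgents w pref S
    · exfalso
      simp only [TTCaux, if_pos h1] at hpref
      rcases point_spec w (hp i) ⟨i, hi⟩ i m hm with heq | hlt
      · rw [heq] at hpref; exact (hp i).2.2 _ hpref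
      · exact (hp i).asymm hlt hpref
    · simp only [TTCaux, if_neg h1] at hpref
      by_cases h2 : m ∈ cycleAgents w pref S
      · simp only [TTCroundAux, if_pos h2, if_neg h1]
        have := TTCroundAux_pos w pref fuel (S \ cycleAgents w pref S) i
        omega
      · simp only [TTCroundAux, if_neg h1, if_neg h2]
        exact Nat.succ_lt_succ (ih _ hcard' i (Finset.mem_sdiff.2 ⟨hi, h1⟩) m
          (Finset.mem_sdiff.2 ⟨hm, h2⟩) hpref)

omit hp in
lemma goodPref_tieBroken (R : WeakOrder H) {lt : Fin n → Fin n → Prop}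
    (hlt : IsTieBreak lt) : GoodPref (tieBroken w R lt) := by
  obtain ⟨htot, htr, hirr⟩ := hlt
  refine ⟨?_, ?_, ?_⟩
  · intro a b hab
    have hsy : w.symm a ≠ w.symm b := fun he => hab (w.symm.injective he)
    rcases R.total a b with h | h
    · by_cases h' : R.rel b a
      · rcases htot _ _ hsy with ht | ht
        · exact Or.inl (Or.inr ⟨⟨h, h'⟩, ht⟩)
        · exact Or.inr (Or.inr ⟨⟨h', h⟩, ht⟩)
      · exact Or.inl (Or.inl ⟨h, h'⟩)
    · by_cases h' : R.rel a b
      · rcases htot _ _ hsy with ht | ht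
        · exact Or.inl (Or.inr ⟨⟨h', h⟩, ht⟩)
        · exact Or.inr (Or.inr ⟨⟨h, h'⟩, ht⟩)
      · exact Or.inr (Or.inl ⟨h, h'⟩)
  · rintro a b c (⟨rab, nba⟩ | ⟨⟨rab, rba⟩, tab⟩) (⟨rbc, ncb⟩ | ⟨⟨rbc, rcb⟩, tbc⟩)
    · exact Or.inl ⟨R.trans _ _ _ rab rbc, fun h => nba (R.trans _ _ _ rbc h)⟩
    · exact Or.inl ⟨R.trans _ _ _ rab rbc, fun h => nba (R.trans _ _ _ rbc h)⟩
    · exact Or.inl ⟨R.trans _ _ _ rab rbc, fun h => ncb (R.trans _ _ _ h rab)⟩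
    · exact Or.inr ⟨⟨R.trans _ _ _ rab rbc, R.trans _ _ _ rcb rba⟩, htr tab tbc⟩
  · rintro a (⟨h, nh⟩ | ⟨-, ht⟩)
    · exact nh h
    · exact hirr _ ht

end AuxProofs

/-- key pigeonhole step: under objective indifferences with at least
two blocks, if `y_j P_j x_j` for `x = TTC_≻(R)`, then some agent `ℓ` assigned in an
earlier cycle has `x_ℓ` in the block of `y_j` but `y_ℓ` outside it; in particular
`¬(y_ℓ I_ℓ x_ℓ)`. -/
theorem TTCtb_pigeonhole_step {n : ℕ} {H B : Type*} (w : Fin n ≃ H)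
    (blk : H → B) (hblk : ∃ a b : H, blk a ≠ blk b)
    (R : Fin n → WeakOrder H) (hR : ∀ i, ObjInd blk (R i))
    (tb : Fin n → Fin n → Fin n → Prop) (htb : ∀ i, IsTieBreak (tb i))
    (y : Fin n ≃ H) (j : Fin n) (hj : (R j).P (y j) (TTCtb w R tb j)) :
    ∃ ℓ : Fin n, TTCtbRound w R tb ℓ < TTCtbRound w R tb j ∧
      blk (TTCtb w R tb ℓ) = blk (y j) ∧ blk (y ℓ) ≠ blk (y j) ∧
      ¬ (R ℓ).I (y ℓ) (TTCtb w R tb ℓ) := by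
  classical
  set pref : Fin n → H → H → Prop := fun i => tieBroken w (R i) (tb i) with hprefdef
  have hp : ∀ i, GoodPref (pref i) := fun i => goodPref_tieBroken w (R i) (htb i)
  have hcard : (Finset.univ : Finset (Fin n)).card ≤ n := by simp
  have hxdef : ∀ i, TTCtb w R tb i = TTCaux w pref n Finset.univ i := fun i => rfl
  have hrdef : ∀ i, TTCtbRound w R tb i = TTCroundAux w pref n Finset.univ i :=
    fun i => rfl
  set x : Fin n → H := TTCtb w R tb with hx
  set rnd : Fin n → ℕ := TTCtbRound w R tb with hrnd
  -- j's own block differs from the block of y j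
  have hI : ¬ (R j).I (y j) (x j) := fun h => hj.2 h.2
  have hblkj : blk (y j) ≠ blk (x j) := fun h => hI ((hR j _ _).2 h)
  -- every house in the block of y j is owned by an agent assigned earlier
  have hearly : ∀ m : Fin n, blk (w m) = blk (y j) → rnd m < rnd j := by
    intro m hm
    have hIm : (R j).I (w m) (y j) := (hR j _ _).2 hm
    have hPm : (R j).P (w m) (x j) :=
      ⟨(R j).trans _ _ _ hIm.1 hj.1, fun h => hj.2 ((R j).trans _ _ _ h hIm.1)⟩
    have hstrict : pref j (w m) (x j) := Or.inl hPm
    rw [hrdef m, hrdef j]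
    exact TTCaux_opt w pref hp n Finset.univ hcard j (Finset.mem_univ j) m
      (Finset.mem_univ m) (by rw [hxdef j] at hstrict; exact hstrict)
  have hxspec : ∀ ℓ, ∃ m, x ℓ = w m ∧ rnd m = rnd ℓ := by
    intro ℓ
    obtain ⟨m, -, h1, h2⟩ :=
      TTCaux_spec w pref hp n Finset.univ hcard ℓ (Finset.mem_univ ℓ)
    exact ⟨m, by rw [hxdef ℓ]; exact h1, by rw [hrdef m, hrdef ℓ]; exact h2⟩
  have hxinj : Function.Injective x := by
    intro a b h
    rw [hxdef a, hxdef b] at h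
    exact TTCaux_inj w pref hp n Finset.univ hcard a (Finset.mem_univ a) b
      (Finset.mem_univ b) h
  set k := rnd j with hk
  set Bk : Finset (Fin n) := Finset.univ.filter (fun m => rnd m < k) with hBk
  have hsub : Bk.image x ⊆ Bk.image ⇑w := by
    intro h hh
    obtain ⟨ℓ, hℓ, rfl⟩ := Finset.mem_image.1 hh
    obtain ⟨m, hm, hr⟩ := hxspec ℓ
    rw [hm]
    exact Finset.mem_image_of_mem _ (Finset.mem_filter.2
      ⟨Finset.mem_univ _, hr ▸ (Finset.mem_filter.1 hℓ).2⟩)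
  have hcards : (Bk.image ⇑w).card ≤ (Bk.image x).card := by
    rw [Finset.card_image_of_injective _ w.injective,
      Finset.card_image_of_injective _ hxinj]
  have hBkeq : Bk.image x = Bk.image ⇑w := Finset.eq_of_subset_of_card_le hsub hcards
  set A : Finset (Fin n) :=
    Finset.univ.filter (fun ℓ => rnd ℓ < k ∧ blk (x ℓ) = blk (y j)) with hA
  set Ay : Finset (Fin n) :=
    Finset.univ.filter (fun ℓ => blk (y ℓ) = blk (y j)) with hAy
  set T : Finset (Fin n) :=
    Finset.univ.filter (fun m => blk (w m) = blk (y j)) with hT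
  have hAx : A.image x = T.image ⇑w := by
    apply Finset.Subset.antisymm
    · intro h hh
      obtain ⟨ℓ, hℓ, rfl⟩ := Finset.mem_image.1 hh
      obtain ⟨m, hm, -⟩ := hxspec ℓ
      rw [hm]
      refine Finset.mem_image_of_mem _ (Finset.mem_filter.2 ⟨Finset.mem_univ _, ?_⟩)
      rw [← hm]
      exact (Finset.mem_filter.1 hℓ).2.2
    · intro h hh
      obtain ⟨m, hmT, rfl⟩ := Finset.mem_image.1 hh
      have hmblk := (Finset.mem_filter.1 hmT).2
      have hmBk : m ∈ Bk := Finset.mem_filter.2 ⟨Finset.mem_univ _, hearly m hmblk⟩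
      have hmem : w m ∈ Bk.image x := hBkeq ▸ Finset.mem_image_of_mem _ hmBk
      obtain ⟨ℓ, hℓBk, hℓ⟩ := Finset.mem_image.1 hmem
      refine Finset.mem_image.2 ⟨ℓ, Finset.mem_filter.2
        ⟨Finset.mem_univ _, (Finset.mem_filter.1 hℓBk).2, by rw [hℓ]; exact hmblk⟩, hℓ⟩
  have hAyx : Ay.image ⇑y = T.image ⇑w := by
    apply Finset.Subset.antisymm
    · intro h hh
      obtain ⟨ℓ, hℓ, rfl⟩ := Finset.mem_image.1 hh
      refine Finset.mem_image.2 ⟨w.symm (y ℓ), Finset.mem_filter.2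
        ⟨Finset.mem_univ _, ?_⟩, by simp⟩
      rw [Equiv.apply_symm_apply]
      exact (Finset.mem_filter.1 hℓ).2
    · intro h hh
      obtain ⟨m, hmT, rfl⟩ := Finset.mem_image.1 hh
      refine Finset.mem_image.2 ⟨y.symm (w m), Finset.mem_filter.2
        ⟨Finset.mem_univ _, ?_⟩, by simp⟩
      rw [Equiv.apply_symm_apply]
      exact (Finset.mem_filter.1 hmT).2
  have hAcard : A.card = T.card := by
    rw [← Finset.card_image_of_injective A hxinj, hAx,
      Finset.card_image_of_injective _ w.injective]
  have hAycard : Ay.card = T.card := by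
    rw [← Finset.card_image_of_injective Ay y.injective, hAyx,
      Finset.card_image_of_injective _ w.injective]
  have hjAy : j ∈ Ay := Finset.mem_filter.2 ⟨Finset.mem_univ _, rfl⟩
  have hjA : j ∉ A := fun h => hblkj ((Finset.mem_filter.1 h).2.2).symm
  have hnot : ¬ A ⊆ Ay := by
    intro hsub2
    have heq2 : A = Ay :=
      Finset.eq_of_subset_of_card_le hsub2 (le_of_eq (hAycard.trans hAcard.symm))
    exact hjA (heq2 ▸ hjAy)
  obtain ⟨ℓ, hℓA, hℓAy⟩ := Finset.not_subset.1 hnot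
  have h1 := (Finset.mem_filter.1 hℓA).2
  have h2 : blk (y ℓ) ≠ blk (y j) :=
    fun h => hℓAy (Finset.mem_filter.2 ⟨Finset.mem_univ _, h⟩)
  refine ⟨ℓ, h1.1, h1.2, h2, fun hIℓ => h2 ?_⟩
  have := (hR ℓ (y ℓ) (x ℓ)).1 hIℓ
  rw [this]
  exact h1.2

end ShapleyScarf
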